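/- arXiv:math/0505162 — 4 statements merged into one kernel-verified Lean document; each statement's English description precedes it below -/
import Mathlib

section
/- Let L be a linear subspace of n×n real matrices closed under transposition, Schur product, and (X,Y) ↦ XDY where D is diagonal with positive diagonal entries. Assume no index i is such that the i-th row of every matrix in L is zero, and no two distinct indices i ≠ j are such that the i-th and j-th rows are parallel in every matrix of L. Then L contains the identity matrix. -/
/-!
A subspace `L` closed under the Schur product is determined by where it vanishes and which
entries it cannot tell apart: a generic `A ∈ L` separates whatever `L` separates, and entrywise
polynomials in `A` without constant term stay in `L`, so by Lagrange interpolation `L` contains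
every matrix that vanishes where `L` does and is constant where `L` is. For the identity this
needs two facts. Every diagonal entry is nonzero somewhere, as `(M D Mᵀ)ᵢᵢ` is the `D`-weighted
squared norm of row `i`. And no off-diagonal entry `(k, l)` is tied to a diagonal entry `(i, i)`:
otherwise comparing the `(k, l)` and `(i, i)` entries of `M D Mᵀ`, `(M ⊙ M) D Eᵀ` and
`E D (M ⊙ M)ᵀ`, where `E ∈ L` is the 0/1 support pattern of `L`, gives `‖Mₖ - Mₗ‖²_D = 0`, so
rows `k` and `l` would coincide in every `M ∈ L`.
-/

open Matrix Polynomial Finset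

theorem Submodule.exists_mem_forall_ne_zero {K V W ι : Type*} [Field K] [Infinite K]
    [AddCommGroup V] [Module K V] [AddCommGroup W] [Module K W] [Finite ι]
    (L : Submodule K V) (φ : ι → V →ₗ[K] W) (hφ : ∀ i, ∃ v ∈ L, φ i v ≠ 0) :
    ∃ v ∈ L, ∀ i, φ i v ≠ 0 := by
  by_contra! h
  obtain ⟨i, hi⟩ := Subspace.exists_eq_top_of_iUnion_eq_univ
    (p := fun i => LinearMap.ker ((φ i).comp L.subtype))
    (Set.eq_univ_of_forall fun v => Set.mem_iUnion.2 (h v v.2))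
  obtain ⟨v, hv, hφv⟩ := hφ i
  exact hφv (show (⟨v, hv⟩ : L) ∈ LinearMap.ker ((φ i).comp L.subtype) from
    hi ▸ Submodule.mem_top)

namespace Matrix

theorem mul_diagonal_mul_transpose_apply {l m n R : Type*} [Fintype n] [DecidableEq n]
    [CommSemiring R] (M : Matrix l n R) (d : n → R) (N : Matrix m n R) (a : l) (b : m) :
    (M * diagonal d * Nᵀ) a b = d ⬝ᵥ (M a * N b) := by
  rw [mul_apply]
  simp only [mul_diagonal, transpose_apply, dotProduct, Pi.mul_apply]
  exact Finset.sum_congr rfl fun _ _ => by ring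

theorem dotProduct_mul_self_eq_zero_iff {n R : Type*} [Fintype n] [Ring R] [LinearOrder R]
    [IsStrictOrderedRing R] {d v : n → R} (hd : ∀ i, 0 < d i) :
    d ⬝ᵥ (v * v) = 0 ↔ v = 0 := by
  refine ⟨fun h => funext fun i => ?_, fun h => by simp [h]⟩
  have hi := (Finset.sum_eq_zero_iff_of_nonneg fun j _ =>
    mul_nonneg (hd j).le (mul_self_nonneg (v j))).1 h i (Finset.mem_univ i)
  simpa [(hd i).ne'] using hi

section HadamardClosed

variable {K m n : Type*} [Field K] {L : Submodule K (Matrix m n K)}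

theorem exists_mem_separating [Fintype m] [Fintype n] [Infinite K]
    (L : Submodule K (Matrix m n K)) :
    ∃ A ∈ L, (∀ i j, (∃ M ∈ L, M i j ≠ 0) → A i j ≠ 0) ∧
      ∀ i j k l, (∃ M ∈ L, M i j ≠ M k l) → A i j ≠ A k l := by
  let φ : (m × n) ⊕ ((m × n) × (m × n)) → Matrix m n K →ₗ[K] K :=
    Sum.elim (fun x => entryLinearMap K K x.1 x.2)
      fun xy => entryLinearMap K K xy.1.1 xy.1.2 - entryLinearMap K K xy.2.1 xy.2.2
  obtain ⟨A, hA, hφA⟩ := L.exists_mem_forall_ne_zero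
    (fun i : {i // ∃ M ∈ L, φ i M ≠ 0} => φ i) fun i => i.2
  refine ⟨A, hA, fun i j h => hφA ⟨.inl (i, j), h⟩, fun i j k l h => ?_⟩
  refine sub_ne_zero.1 (hφA ⟨.inr ((i, j), (k, l)), ?_⟩)
  simpa [φ, sub_eq_zero] using h

theorem map_eval_mem_of_hadamard_mem (hL : ∀ M ∈ L, ∀ N ∈ L, M ⊙ N ∈ L) {A : Matrix m n K}
    (hA : A ∈ L) {p : K[X]} (hp : p.eval 0 = 0) : A.map p.eval ∈ L := by
  have hpow : ∀ j, A.map (· ^ (j + 1)) ∈ L := by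
    intro j
    induction j with
    | zero => simpa using hA
    | succ j ih =>
      convert hL _ ih _ hA using 1
      ext a b
      simp [pow_succ]
  have hsum : A.map p.eval = ∑ j ∈ range (p.natDegree + 1), p.coeff j • A.map (· ^ j) := by
    ext a b
    simp [eval_eq_sum_range, Matrix.sum_apply]
  rw [hsum]
  refine Submodule.sum_mem _ fun j _ => ?_
  cases j with
  | zero => simp [coeff_zero_eq_eval_zero, hp]
  | succ j => exact L.smul_mem _ (hpow j)

theorem exists_map_eval_eq [Fintype m] [Fintype n] (A F : Matrix m n K)
    (hF : ∀ i j k l, A i j = A k l → F i j = F k l) (h0 : ∀ i j, A i j = 0 → F i j = 0) :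
    ∃ p : K[X], p.eval 0 = 0 ∧ A.map p.eval = F := by
  classical
  let g := Function.extend (fun x : m × n => A x.1 x.2) (fun x => F x.1 x.2) 0
  have hg : ∀ i j, g (A i j) = F i j := fun i j =>
    Function.FactorsThrough.extend_apply (fun x y h => hF _ _ _ _ h) 0 (i, j)
  have hg0 : g 0 = 0 := by
    by_cases h : ∃ x : m × n, A x.1 x.2 = 0
    · obtain ⟨x, hx⟩ := h
      simpa [hx, h0 _ _ hx] using hg x.1 x.2
    · exact Function.extend_apply' _ _ _ h
  let s := insert 0 (univ.image fun x : m × n => A x.1 x.2)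
  have hp : ∀ x ∈ s, (Lagrange.interpolate s id g).eval x = g x := fun x hx => by
    simpa using Lagrange.eval_interpolate_at_node g (Set.injOn_id _) hx
  refine ⟨Lagrange.interpolate s id g, by rw [hp 0 (mem_insert_self _ _), hg0], ?_⟩
  ext i j
  rw [map_apply, hp _ (mem_insert_of_mem (mem_image_of_mem _ (mem_univ (i, j)))), hg]

theorem mem_of_hadamard_closed [Fintype m] [Fintype n] [Infinite K]
    (hL : ∀ M ∈ L, ∀ N ∈ L, M ⊙ N ∈ L) (F : Matrix m n K)
    (hzero : ∀ i j, (∀ M ∈ L, M i j = 0) → F i j = 0)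
    (hconst : ∀ i j k l, (∀ M ∈ L, M i j = M k l) → F i j = F k l) : F ∈ L := by
  obtain ⟨A, hA, hA0, hAsep⟩ := exists_mem_separating L
  obtain ⟨p, hp0, hpF⟩ := exists_map_eval_eq A F
    (fun i j k l h => hconst i j k l (by simpa using mt (hAsep i j k l) (not_not.2 h)))
    (fun i j h => hzero i j (by simpa using mt (hA0 i j) (not_not.2 h)))
  exact hpF ▸ map_eval_mem_of_hadamard_mem hL hA hp0

def SupportRel (L : Submodule K (Matrix m n K)) (a : m) (b : n) : Prop :=
  ∃ M ∈ L, M a b ≠ 0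

open Classical in
noncomputable def supportIndicator (L : Submodule K (Matrix m n K)) : Matrix m n K :=
  of fun a b => if SupportRel L a b then 1 else 0

theorem SupportRel.symm {L : Submodule K (Matrix n n K)} (hT : ∀ M ∈ L, Mᵀ ∈ L) {a b : n}
    (h : SupportRel L a b) : SupportRel L b a :=
  let ⟨M, hM, hne⟩ := h
  ⟨Mᵀ, hT M hM, hne⟩

theorem supportIndicator_mem [Fintype m] [Fintype n] [Infinite K] (hL : ∀ M ∈ L, ∀ N ∈ L, M ⊙ N ∈ L) :
    supportIndicator L ∈ L := by
  classical
  refine mem_of_hadamard_closed hL _ (fun i j h => ?_) fun i j k l h => ?_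
  · have hij : ¬SupportRel L i j := fun ⟨M, hM, hne⟩ => hne (h M hM)
    simp [supportIndicator, hij]
  · have hijkl : SupportRel L i j ↔ SupportRel L k l :=
      exists_congr fun M => and_congr_right fun hM => by rw [h M hM]
    exact if_congr hijkl rfl rfl

theorem supportIndicator_hadamard {M : Matrix m n K} (hM : M ∈ L) : supportIndicator L ⊙ M = M := by
  ext a b
  by_cases h : M a b = 0
  · simp [h]
  · simp [supportIndicator, show SupportRel L a b from ⟨M, hM, h⟩]

end HadamardClosed

section WeightedCoherent

variable {n : Type*} [Fintype n] [DecidableEq n]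

/-- The axioms of a coherent algebra, with the product `X * Y` replaced by `X * diagonal d * Y`
and without requiring the identity and the all-ones matrix. -/
structure IsWeightedCoherent (L : Submodule ℝ (Matrix n n ℝ)) (d : n → ℝ) : Prop where
  transpose_mem : ∀ M ∈ L, Mᵀ ∈ L
  hadamard_mem : ∀ M ∈ L, ∀ N ∈ L, M ⊙ N ∈ L
  mul_diagonal_mul_mem : ∀ M ∈ L, ∀ N ∈ L, M * diagonal d * N ∈ L

variable {L : Submodule ℝ (Matrix n n ℝ)} {d : n → ℝ}

namespace IsWeightedCoherent

variable (hL : IsWeightedCoherent L d) (hd : ∀ i, 0 < d i)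
include hL hd

theorem supportRel_trans {a b c : n} (hac : SupportRel L a c) (hcb : SupportRel L c b) :
    SupportRel L a b := by
  obtain ⟨M, hM, hMac⟩ := hac
  obtain ⟨N, hN, hNbc⟩ := hcb.symm hL.transpose_mem
  refine ⟨(M ⊙ M) * diagonal d * (N ⊙ N)ᵀ,
    hL.mul_diagonal_mul_mem _ (hL.hadamard_mem _ hM _ hM) _
      (hL.transpose_mem _ (hL.hadamard_mem _ hN _ hN)), ?_⟩
  have hsq : (M ⊙ M) a * (N ⊙ N) b = (M a * N b) * (M a * N b) := by
    ext; simp only [Pi.mul_apply, hadamard_apply]; ring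
  rw [mul_diagonal_mul_transpose_apply, hsq, Ne, dotProduct_mul_self_eq_zero_iff hd]
  exact fun h => mul_ne_zero hMac hNbc (congrFun h c)

theorem supportIndicator_row_eq {k l : n} (h : SupportRel L k l) :
    supportIndicator L k = supportIndicator L l := by
  classical
  ext m
  refine if_congr ⟨fun hkm => ?_, fun hlm => ?_⟩ rfl rfl
  · exact hL.supportRel_trans hd (h.symm hL.transpose_mem) hkm
  · exact hL.supportRel_trans hd h hlm

theorem row_eq_of_forall_apply_eq_apply_self {i k l : n} (hi : SupportRel L i i)
    (h : ∀ M ∈ L, M k l = M i i) {M : Matrix n n ℝ} (hM : M ∈ L) : M k = M l := by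
  set E := supportIndicator L
  have hE : E ∈ L := supportIndicator_mem hL.hadamard_mem
  have hkl : SupportRel L k l :=
    let ⟨N, hN, hNi⟩ := hi
    ⟨N, hN, by rwa [h N hN]⟩
  have hEkl : E k = E l := hL.supportIndicator_row_eq hd hkl
  have hEM : ∀ a, M a * M a * E a = M a * M a := fun a => by
    ext b
    have hEMab : E a b * M a b = M a b := congrArg (· a b) (supportIndicator_hadamard hM)
    simp only [Pi.mul_apply]
    linear_combination M a b * hEMab
  have hMM_row : ∀ a, (M ⊙ M) a = M a * M a := fun _ => rfl
  have hform : ∀ X ∈ L, ∀ Y ∈ L, d ⬝ᵥ (X k * Y l) = d ⬝ᵥ (X i * Y i) := fun X hX Y hY => by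
    simpa only [mul_diagonal_mul_transpose_apply] using
      h _ (hL.mul_diagonal_mul_mem _ hX _ (hL.transpose_mem _ hY))
  have hMM := hL.hadamard_mem _ hM _ hM
  have h1 : d ⬝ᵥ (M k * M l) = d ⬝ᵥ (M i * M i) := hform M hM M hM
  have h2 : d ⬝ᵥ (M k * M k) = d ⬝ᵥ (M i * M i) := by
    simpa only [← hEkl, hMM_row, hEM] using hform _ hMM _ hE
  have h3 : d ⬝ᵥ (M l * M l) = d ⬝ᵥ (M i * M i) := by
    simpa only [hEkl, hMM_row, mul_comm (E _), hEM] using hform _ hE _ hMM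
  have hdiff : d ⬝ᵥ ((M k - M l) * (M k - M l)) = 0 := by
    have e : (M k - M l) * (M k - M l) = M k * M k + M l * M l - (M k * M l + M k * M l) := by
      ring
    rw [e, dotProduct_sub, dotProduct_add, dotProduct_add, h1, h2, h3]
    ring
  exact sub_eq_zero.1 ((dotProduct_mul_self_eq_zero_iff hd).1 hdiff)

end IsWeightedCoherent

end WeightedCoherent

end Matrix

/-- A linear subspace `L` of `n × n` real matrices closed under transposition,
Schur product and `(X, Y) ↦ X * D * Y` (`D` diagonal with positive diagonal), such that no row
is zero in every matrix of `L` and no two distinct rows are parallel in every matrix of `L`,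
contains the identity matrix. -/
theorem subspace_contains_identity {n : ℕ}
    (L : Submodule ℝ (Matrix (Fin n) (Fin n) ℝ))
    (D : Matrix (Fin n) (Fin n) ℝ) (hDdiag : D.IsDiag) (hDpos : ∀ i, 0 < D i i)
    (hT : ∀ M ∈ L, Mᵀ ∈ L)
    (hSchur : ∀ M ∈ L, ∀ N ∈ L, Matrix.hadamard M N ∈ L)
    (hConc : ∀ M ∈ L, ∀ N ∈ L, M * D * N ∈ L)
    (hrow : ∀ i : Fin n, ∃ M ∈ L, ∃ j, M i j ≠ 0)
    (hpar : ∀ i j : Fin n, i ≠ j → ∃ M ∈ L,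
      ¬ ∃ a b : ℝ, (a ≠ 0 ∨ b ≠ 0) ∧ ∀ l, a * M i l + b * M j l = 0) :
    (1 : Matrix (Fin n) (Fin n) ℝ) ∈ L := by
  have hL : IsWeightedCoherent L D.diag := ⟨hT, hSchur, by rwa [hDdiag.diagonal_diag]⟩
  have hdiag : ∀ i, SupportRel L i i := fun i =>
    let ⟨M, hM, j, hij⟩ := hrow i
    hL.supportRel_trans hDpos ⟨M, hM, hij⟩ (SupportRel.symm hT ⟨M, hM, hij⟩)
  have hoff : ∀ i k l, k ≠ l → ¬∀ M ∈ L, M k l = M i i := fun i k l hkl h => by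
    obtain ⟨M, hM, hnpar⟩ := hpar k l hkl
    refine hnpar ⟨1, -1, Or.inl one_ne_zero, fun m => ?_⟩
    rw [hL.row_eq_of_forall_apply_eq_apply_self hDpos (hdiag i) h hM]
    ring
  refine mem_of_hadamard_closed hSchur 1 (fun i j h => ?_) fun i j k l h => ?_
  · rcases eq_or_ne i j with rfl | hij
    · obtain ⟨M, hM, hne⟩ := hdiag i
      exact absurd (h M hM) hne
    · exact one_apply_ne hij
  · rcases eq_or_ne i j with rfl | hij <;> rcases eq_or_ne k l with rfl | hkl
    · simp
    · exact absurd (fun M hM => (h M hM).symm) (hoff i k l hkl)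
    · exact absurd h (hoff k i j hij)
    · rw [one_apply_ne hij, one_apply_ne hkl]
end

section
/- Let B be a real symmetric n×n matrix and D a diagonal matrix with positive diagonal entries. Then there exist t ≥ 2 and real coefficients a₂,…,a_t such that B = ∑_{s=2}^{t} a_s (B D²)^{s-1} B. -/
/-! For a symmetric `M`, `M ^ 2 * N = 0` gives `(M * N)ᵀ * (M * N) = 0`, so `X` divides the
minimal polynomial of `M` at most once: some `r` with `r(0) ≠ 0` satisfies `M * r(M) = 0`, and
solving for the linear term gives `M = M ^ 2 * s(M)`, a combination of the powers `M ^ k`,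
`k ≥ 2`. Applied to the symmetric matrix `D * B * D`, whose powers are
`D * (B * D ^ 2) ^ (k - 1) * B * D`, this is the identity after cancelling the invertible `D`
on both sides. -/

open Matrix Finset Polynomial

theorem mul_mul_pow_succ {M : Type*} [Monoid M] (a b : M) (k : ℕ) :
    (a * b * a) ^ (k + 1) = a * ((b * a ^ 2) ^ k * b) * a := by
  rw [pow_succ, mul_assoc a b, ← mul_assoc _ a, mul_pow_mul, sq]
  simp only [mul_assoc]

theorem exists_eq_sq_mul_aeval_of_mul_aeval_eq_zero {K A : Type*} [Field K] [Ring A]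
    [Algebra K A] {x : A} {r : K[X]} (hr : r.coeff 0 ≠ 0)
    (h : x * aeval x r = 0) : ∃ s : K[X], x = x ^ 2 * aeval x s := by
  refine ⟨-((r.coeff 0)⁻¹ • divX r), ?_⟩
  have hx : r.coeff 0 • x = -(x ^ 2 * aeval x (divX r)) := by
    rw [← X_mul_divX_add r, map_add, map_mul, aeval_X, aeval_C, mul_add, ← mul_assoc, ← sq,
      ← Algebra.commutes, ← Algebra.smul_def] at h
    exact eq_neg_of_add_eq_zero_right h
  rw [map_neg, map_smul, mul_neg, mul_smul_comm, ← smul_neg, ← hx, inv_smul_smul₀ hr]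

theorem sq_mul_aeval_eq_sum_Icc {R A : Type*} [CommSemiring R] [Semiring A] [Algebra R A]
    (x : A) (s : R[X]) :
    x ^ 2 * aeval x s = ∑ k ∈ Icc 2 (s.natDegree + 2), s.coeff (k - 2) • x ^ k := by
  rw [aeval_eq_sum_range, Finset.mul_sum, range_eq_Ico, ← Ico_add_one_right_eq_Icc,
    ← zero_add 2, ← Nat.add_right_comm, ← sum_Ico_add']
  refine sum_congr rfl fun i _ => ?_
  rw [Nat.add_sub_cancel, mul_smul_comm, ← pow_add, add_comm]

namespace Matrix

variable {n R : Type*} [Fintype n] [DecidableEq n]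
  [PartialOrder R] [CommRing R] [StarRing R] [StarOrderedRing R] [NoZeroDivisors R]

theorem IsHermitian.mul_eq_zero_of_sq_mul_eq_zero {M N : Matrix n n R} (hM : M.IsHermitian)
    (h : M ^ 2 * N = 0) : M * N = 0 := by
  rw [← conjTranspose_mul_self_eq_zero, conjTranspose_mul, hM.eq, Matrix.mul_assoc,
    ← Matrix.mul_assoc M, ← sq, h, Matrix.mul_zero]

theorem IsHermitian.mul_eq_zero_of_pow_mul_eq_zero {M N : Matrix n n R} (hM : M.IsHermitian) :
    ∀ {k : ℕ}, M ^ (k + 1) * N = 0 → M * N = 0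
  | 0, h => by rwa [zero_add, pow_one] at h
  | k + 1, h => hM.mul_eq_zero_of_pow_mul_eq_zero (k := k) <| by
      have h2 : M ^ 2 * (M ^ k * N) = 0 := by rwa [← Matrix.mul_assoc, ← pow_add, add_comm]
      rw [pow_succ', Matrix.mul_assoc]
      exact hM.mul_eq_zero_of_sq_mul_eq_zero h2

variable {K : Type*} [Field K] [PartialOrder K] [StarRing K] [StarOrderedRing K]

theorem IsHermitian.exists_coeff_zero_ne_zero_mul_aeval_eq_zero {M : Matrix n n K}
    (hM : M.IsHermitian) : ∃ r : K[X], r.coeff 0 ≠ 0 ∧ M * aeval M r = 0 := by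
  obtain ⟨r, hμ, hr⟩ := (minpoly K M).exists_eq_pow_rootMultiplicity_mul_and_not_dvd
    (minpoly.ne_zero (Algebra.IsIntegral.isIntegral M)) 0
  have hμM := minpoly.aeval K M
  rw [hμ, C_0, sub_zero, map_mul, map_pow, aeval_X] at hμM
  rw [C_0, sub_zero, X_dvd_iff] at hr
  refine ⟨r, hr, hM.mul_eq_zero_of_pow_mul_eq_zero (k := rootMultiplicity 0 (minpoly K M)) ?_⟩
  rw [pow_succ', Matrix.mul_assoc, hμM, Matrix.mul_zero]

theorem IsHermitian.exists_eq_sum_Icc_smul_pow {M : Matrix n n K} (hM : M.IsHermitian) :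
    ∃ (t : ℕ) (a : ℕ → K), 2 ≤ t ∧ M = ∑ k ∈ Icc 2 t, a k • M ^ k := by
  obtain ⟨r, hr, hMr⟩ := hM.exists_coeff_zero_ne_zero_mul_aeval_eq_zero
  obtain ⟨s, hs⟩ := exists_eq_sq_mul_aeval_of_mul_aeval_eq_zero hr hMr
  exact ⟨s.natDegree + 2, fun k => s.coeff (k - 2), le_add_self,
    hs.trans (sq_mul_aeval_eq_sum_Icc M s)⟩

end Matrix

/-- for a real symmetric matrix `B` and a diagonal matrix `D` with positive
diagonal entries, there exist `t ≥ 2` and reals `a₂, …, a_t` with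
`B = ∑_{s=2}^{t} a_s (B D²)^{s-1} B`. -/
theorem symm_matrix_higher_power_expansion {n : ℕ}
    (B D : Matrix (Fin n) (Fin n) ℝ) (hB : B.IsSymm)
    (hDdiag : D.IsDiag) (hDpos : ∀ i, 0 < D i i) :
    ∃ (t : ℕ) (a : ℕ → ℝ), 2 ≤ t ∧
      B = ∑ s ∈ Finset.Icc 2 t, a s • ((B * D ^ 2) ^ (s - 1) * B) := by
  have hD : IsUnit D := by
    rw [← hDdiag.diagonal_diag, isUnit_diagonal, Pi.isUnit_iff]
    exact fun i => (hDpos i).ne'.isUnit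
  have hDBD : (D * B * D).IsHermitian := by
    simpa only [(isHermitian_iff_isSymm.mpr hDdiag.isSymm).eq] using
      isHermitian_conjTranspose_mul_mul D (isHermitian_iff_isSymm.mpr hB)
  obtain ⟨t, a, ht, hpow⟩ := hDBD.exists_eq_sum_Icc_smul_pow
  refine ⟨t, a, ht, hD.mul_left_cancel (hD.mul_right_cancel ?_)⟩
  calc D * B * D = ∑ s ∈ Icc 2 t, a s • (D * B * D) ^ s := hpow
    _ = ∑ s ∈ Icc 2 t, a s • (D * ((B * D ^ 2) ^ (s - 1) * B) * D) :=
        sum_congr rfl fun s hs => by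
          rw [← mul_mul_pow_succ, Nat.sub_add_cancel (one_le_two.trans (mem_Icc.1 hs).1)]
    _ = D * (∑ s ∈ Icc 2 t, a s • ((B * D ^ 2) ^ (s - 1) * B)) * D := by
        simp only [Finset.mul_sum, Finset.sum_mul, mul_smul_comm, smul_mul_assoc]
end

section
/- Let U, W : [0,1]² → [0,1] be symmetric measurable functions, and let F be a finite simple graph on vertex set {1,…,n} (n ≥ 2) with m edges in which vertices 1 and 2 are not adjacent, where vertex 1 has degree d₁ and vertex 2 has degree d₂. Define t_{xy}(F,W) = ∫_{[0,1]^{n-2}} ∏_{ij ∈ E(F)} W(x_i,x_j) dx₃⋯dxₙ where x₁ = x, x₂ = y. Then for all x, y ∈ [0,1]: |t_{xy}(F,U) − t_{xy}(F,W)| ≤ d₁‖U−W‖_x + d₂‖U−W‖_y + (m − d₁ − d₂)‖U−W‖₁, where ‖F‖_x = ∫₀¹ |F(x,y)| dy and ‖·‖₁ is the L¹ norm on [0,1]². -/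
open MeasureTheory Finset

/-- Partial homomorphism density `t_{xy}(F, W)` of a graph `F` on `{0, 1, …, n+1}` in a kernel
`W`, where the labeled vertices `0` and `1` are pinned to the values `x` and `y` and all other
vertices are integrated over `[0,1]`. -/
noncomputable def partialDensity {n : ℕ} (G : SimpleGraph (Fin (n + 2))) [DecidableRel G.Adj]
    (W : ℝ → ℝ → ℝ) (x y : ℝ) : ℝ :=
  ∫ v in Set.univ.pi (fun _ : Fin (n + 2) => Set.Icc (0 : ℝ) 1),
    ∏ p ∈ Finset.univ.filter (fun p : Fin (n + 2) × Fin (n + 2) => p.1 < p.2 ∧ G.Adj p.1 p.2),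
      W (Function.update (Function.update v 0 x) 1 y p.1)
        (Function.update (Function.update v 0 x) 1 y p.2)

/-- `‖F‖_x = ∫₀¹ |F(x,y)| dy`. -/
noncomputable def normAt (F : ℝ → ℝ → ℝ) (x : ℝ) : ℝ := ∫ y in Set.Icc (0 : ℝ) 1, |F x y|

/-- The `L¹` norm `‖F‖₁` of a kernel on `[0,1]²`. -/
noncomputable def normL1 (F : ℝ → ℝ → ℝ) : ℝ :=
  ∫ x in Set.Icc (0 : ℝ) 1, ∫ y in Set.Icc (0 : ℝ) 1, |F x y|

/-!
Since all edge weights lie in `[0,1]`, telescoping bounds `|∏ₑ U - ∏ₑ W|` pointwise by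
`∑ₑ |U - W|`. After integrating over the free vertices, each edge term sees at most two free
coordinates, which are independent under the product measure: an edge at the pinned vertex `0`
(resp. `1`) contributes `‖U - W‖_x` (resp. `‖U - W‖_y`), any other edge `‖U - W‖₁`. As `0` and `1`
are not adjacent, there are `d₁`, `d₂` and `m - d₁ - d₂` edges of these three kinds.
-/

theorem Finset.norm_prod_sub_prod_le {ι R : Type*} [NormedCommRing R] [NormOneClass R]
    (s : Finset ι) {f g : ι → R} (hf : ∀ i ∈ s, ‖f i‖ ≤ 1) (hg : ∀ i ∈ s, ‖g i‖ ≤ 1) :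
    ‖∏ i ∈ s, f i - ∏ i ∈ s, g i‖ ≤ ∑ i ∈ s, ‖f i - g i‖ := by
  classical
  induction s using Finset.induction_on with
  | empty => simp
  | insert a s ha ih =>
    simp only [mem_insert, forall_eq_or_imp] at hf hg
    rw [prod_insert ha, prod_insert ha, sum_insert ha]
    have hprod : ‖∏ i ∈ s, g i‖ ≤ 1 :=
      (Finset.norm_prod_le s g).trans (prod_le_one (fun _ _ => norm_nonneg _) hg.2)
    calc ‖f a * ∏ i ∈ s, f i - g a * ∏ i ∈ s, g i‖
        = ‖f a * (∏ i ∈ s, f i - ∏ i ∈ s, g i) + (f a - g a) * ∏ i ∈ s, g i‖ := by ring_nf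
      _ ≤ ‖f a‖ * ‖∏ i ∈ s, f i - ∏ i ∈ s, g i‖ + ‖f a - g a‖ * ‖∏ i ∈ s, g i‖ :=
        (norm_add_le _ _).trans (add_le_add (norm_mul_le _ _) (norm_mul_le _ _))
      _ ≤ 1 * ∑ i ∈ s, ‖f i - g i‖ + ‖f a - g a‖ * 1 :=
        add_le_add (mul_le_mul hf.1 (ih hf.2 hg.2) (norm_nonneg _) zero_le_one)
          (mul_le_mul_of_nonneg_left hprod (norm_nonneg _))
      _ = ‖f a - g a‖ + ∑ i ∈ s, ‖f i - g i‖ := by ring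

theorem Finset.sum_ite_ite_const {α R : Type*} [CommRing R] (s : Finset α) (P Q : α → Prop)
    [DecidablePred P] [DecidablePred Q] (hPQ : ∀ a ∈ s, P a → ¬ Q a) (A B C : R) :
    ∑ a ∈ s, (if P a then A else if Q a then B else C) =
      #(s.filter P) * A + #(s.filter Q) * B + (#s - #(s.filter P) - #(s.filter Q)) * C := by
  have hsplit : ∀ a ∈ s, (if P a then A else if Q a then B else C) =
      C + (if P a then A - C else 0) + (if Q a then B - C else 0) := by
    intro a ha
    by_cases hP : P a
    · simp [hP, hPQ a ha hP]
    · by_cases hQ : Q a <;> simp [hP, hQ]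
  rw [sum_congr rfl hsplit, sum_add_distrib, sum_add_distrib, ← sum_filter, ← sum_filter]
  simp only [sum_const, nsmul_eq_mul]
  ring

theorem Fin.one_lt_of_ne_zero_of_ne_one {n : ℕ} {i : Fin (n + 2)} (h0 : i ≠ 0) (h1 : i ≠ 1) :
    1 < i := by
  rw [Ne, Fin.ext_iff, Fin.val_zero] at h0
  rw [Ne, Fin.ext_iff, Fin.val_one] at h1
  rw [Fin.lt_def, Fin.val_one]
  omega

namespace MeasureTheory

theorem abs_integral_prod_sub_integral_prod_le {ι Ω : Type*} [MeasurableSpace Ω] {μ : Measure Ω}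
    [IsFiniteMeasure μ] (s : Finset ι) {f g : ι → Ω → ℝ}
    (hfm : ∀ i ∈ s, AEStronglyMeasurable (f i) μ) (hgm : ∀ i ∈ s, AEStronglyMeasurable (g i) μ)
    (hf : ∀ i ∈ s, ∀ ω, |f i ω| ≤ 1) (hg : ∀ i ∈ s, ∀ ω, |g i ω| ≤ 1) :
    |∫ ω, ∏ i ∈ s, f i ω ∂μ - ∫ ω, ∏ i ∈ s, g i ω ∂μ| ≤ ∑ i ∈ s, ∫ ω, |f i ω - g i ω| ∂μ := by
  have integrable_prod : ∀ h : ι → Ω → ℝ, (∀ i ∈ s, AEStronglyMeasurable (h i) μ) →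
      (∀ i ∈ s, ∀ ω, |h i ω| ≤ 1) → Integrable (fun ω => ∏ i ∈ s, h i ω) μ := fun h hm hb =>
    .of_bound (Finset.aestronglyMeasurable_fun_prod s hm) 1 <| .of_forall fun ω => by
      rw [Real.norm_eq_abs, abs_prod]
      exact prod_le_one (fun _ _ => abs_nonneg _) fun i hi => hb i hi ω
  have integrable_diff : ∀ i ∈ s, Integrable (fun ω => |f i ω - g i ω|) μ := fun i hi =>
    .of_bound ((hfm i hi).sub (hgm i hi)).norm 2 <| .of_forall fun ω => by
      rw [Real.norm_eq_abs, abs_abs]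
      exact (abs_sub _ _).trans (by linarith [hf i hi ω, hg i hi ω])
  rw [← integral_sub (integrable_prod f hfm hf) (integrable_prod g hgm hg),
    ← integral_finsetSum s integrable_diff]
  refine (abs_integral_le_integral_abs).trans <|
    integral_mono_of_nonneg (.of_forall fun _ => abs_nonneg _)
      (integrable_finsetSum s integrable_diff) (.of_forall fun ω => ?_)
  simpa only [Real.norm_eq_abs] using
    Finset.norm_prod_sub_prod_le s (f := fun i => f i ω) (g := fun i => g i ω)
      (fun i hi => (Real.norm_eq_abs _).trans_le (hf i hi ω))
      (fun i hi => (Real.norm_eq_abs _).trans_le (hg i hi ω))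

section ProductMeasure

variable {ι : Type*} [Fintype ι] {α : ι → Type*} [∀ i, MeasurableSpace (α i)]
  {μ : (i : ι) → Measure (α i)} [∀ i, IsProbabilityMeasure (μ i)]

theorem Measure.map_pi_eval_prodMk {i j : ι} (hij : i ≠ j) :
    (Measure.pi μ).map (fun v => (v i, v j)) = (μ i).prod (μ j) := by
  have hindep := (ProbabilityTheory.iIndepFun_pi (μ := μ) (X := fun i (a : α i) => a)
    fun _ => aemeasurable_id).indepFun hij
  rw [hindep.map_prod_eq_prod_map_map (measurable_pi_apply i).aemeasurable
    (measurable_pi_apply j).aemeasurable, (measurePreserving_eval μ i).map_eq,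
    (measurePreserving_eval μ j).map_eq]

theorem integral_pi_comp_eval (i : ι) {f : α i → ℝ} (hf : AEStronglyMeasurable f (μ i)) :
    ∫ v, f (v i) ∂Measure.pi μ = ∫ a, f a ∂μ i := by
  rw [← (measurePreserving_eval μ i).map_eq] at hf ⊢
  exact (integral_map (measurable_pi_apply i).aemeasurable hf).symm

theorem integral_pi_comp_eval_pair {i j : ι} (hij : i ≠ j) {f : α i → α j → ℝ}
    (hf : Integrable (Function.uncurry f) ((μ i).prod (μ j))) :
    ∫ v, f (v i) (v j) ∂Measure.pi μ = ∫ a, ∫ b, f a b ∂μ j ∂μ i := by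
  have hmap := Measure.map_pi_eval_prodMk (μ := μ) hij
  calc ∫ v, f (v i) (v j) ∂Measure.pi μ
      = ∫ p, Function.uncurry f p ∂(Measure.pi μ).map (fun v => (v i, v j)) :=
        (integral_map ((measurable_pi_apply i).prodMk (measurable_pi_apply j)).aemeasurable
          (hmap ▸ hf.aestronglyMeasurable)).symm
    _ = ∫ a, ∫ b, f a b ∂μ j ∂μ i := by rw [hmap]; exact integral_prod _ hf

end ProductMeasure

instance : IsProbabilityMeasure (volume.restrict (Set.Icc (0 : ℝ) 1)) :=
  ⟨by simp [Real.volume_Icc]⟩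

theorem integral_pi_update_update_pair {α : Type*} [MeasurableSpace α] {μ : Measure α}
    [IsProbabilityMeasure μ] {n : ℕ} {D : α → α → ℝ} (hD : Measurable (Function.uncurry D))
    (hDi : Integrable (Function.uncurry D) (μ.prod μ)) (x y : α) {i j : Fin (n + 2)}
    (hij : i < j) (hj : j ≠ 1) :
    ∫ v, D (Function.update (Function.update v 0 x) 1 y i)
        (Function.update (Function.update v 0 x) 1 y j) ∂Measure.pi (fun _ => μ) =
      if i = 0 then ∫ b, D x b ∂μ else if i = 1 then ∫ b, D y b ∂μ else ∫ a, ∫ b, D a b ∂μ ∂μ := by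
  have hj0 : j ≠ 0 := (lt_of_le_of_lt (Fin.zero_le i) hij).ne'
  have hmeas : ∀ a, AEStronglyMeasurable (D a) μ := fun a =>
    (hD.comp measurable_prodMk_left).aestronglyMeasurable
  split_ifs with hi0 hi1
  · subst hi0
    simpa [hj0, hj] using integral_pi_comp_eval j (hmeas x)
  · subst hi1
    simpa [hj0, hj] using integral_pi_comp_eval j (hmeas y)
  · simpa [hi0, hi1, hj0, hj] using integral_pi_comp_eval_pair hij.ne hDi

end MeasureTheory

namespace SimpleGraph

variable {V : Type*} [Fintype V] [LinearOrder V] (G : SimpleGraph V) [DecidableRel G.Adj]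

def sortedEdges : Finset (V × V) := univ.filter fun p => p.1 < p.2 ∧ G.Adj p.1 p.2

theorem card_sortedEdges [DecidableEq V] : #G.sortedEdges = #G.edgeFinset := by
  refine card_bij (fun p _ => s(p.1, p.2)) (fun p hp => ?_) (fun p hp q hq hpq => ?_) ?_
  · simp only [sortedEdges, mem_filter, mem_univ, true_and] at hp
    simpa using hp.2
  · simp only [sortedEdges, mem_filter, mem_univ, true_and] at hp hq
    rcases Sym2.eq_iff.1 hpq with ⟨h1, h2⟩ | ⟨h1, h2⟩
    · exact Prod.ext h1 h2
    · exact absurd (hp.1.trans (h2 ▸ hq.1)) (h1 ▸ lt_irrefl _)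
  · refine Sym2.ind fun a b hab => ?_
    rw [mem_edgeFinset, mem_edgeSet] at hab
    rcases hab.ne.lt_or_gt with h | h
    · exact ⟨(a, b), by simp [sortedEdges, h, hab], rfl⟩
    · exact ⟨(b, a), by simp [sortedEdges, h, hab.symm], Sym2.eq_swap⟩

theorem card_filter_fst_sortedEdges {v : V} (hv : ∀ w, G.Adj v w → v < w) :
    #(G.sortedEdges.filter (·.1 = v)) = G.degree v := by
  rw [← card_neighborFinset_eq_degree]
  refine card_nbij' Prod.snd (fun w => (v, w)) (fun p hp => ?_) (fun w hw => ?_)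
    (fun p hp => ?_) (fun w _ => rfl)
  · simp only [sortedEdges, mem_coe, mem_filter, mem_univ, true_and] at hp
    simpa [← hp.2] using hp.1.2
  · simp only [mem_coe, mem_neighborFinset] at hw
    simp [sortedEdges, hv w hw, hw]
  · simp only [sortedEdges, mem_coe, mem_filter, mem_univ, true_and] at hp
    exact Prod.ext hp.2.symm rfl

end SimpleGraph

section PartialDensity

variable {n : ℕ} (G : SimpleGraph (Fin (n + 2))) [DecidableRel G.Adj]

theorem partialDensity_eq_integral_pi (V : ℝ → ℝ → ℝ) (x y : ℝ) :
    partialDensity G V x y =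
      ∫ v, ∏ p ∈ G.sortedEdges, V (Function.update (Function.update v 0 x) 1 y p.1)
          (Function.update (Function.update v 0 x) 1 y p.2)
        ∂Measure.pi fun _ => volume.restrict (Set.Icc (0 : ℝ) 1) := by
  rw [partialDensity, volume_pi, Measure.restrict_pi_pi]
  rfl

theorem integral_abs_sub_of_mem_sortedEdges {U W : ℝ → ℝ → ℝ}
    (hUmeas : Measurable fun p : ℝ × ℝ => U p.1 p.2)
    (hWmeas : Measurable fun p : ℝ × ℝ => W p.1 p.2)
    (hUrange : ∀ x y, U x y ∈ Set.Icc (0 : ℝ) 1) (hWrange : ∀ x y, W x y ∈ Set.Icc (0 : ℝ) 1)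
    (hnadj : ¬ G.Adj 0 1) (x y : ℝ) {p : Fin (n + 2) × Fin (n + 2)} (hp : p ∈ G.sortedEdges) :
    ∫ v, |U (Function.update (Function.update v 0 x) 1 y p.1)
          (Function.update (Function.update v 0 x) 1 y p.2)
        - W (Function.update (Function.update v 0 x) 1 y p.1)
          (Function.update (Function.update v 0 x) 1 y p.2)|
        ∂Measure.pi (fun _ => volume.restrict (Set.Icc (0 : ℝ) 1)) =
      if p.1 = 0 then normAt (fun a b => U a b - W a b) x
      else if p.1 = 1 then normAt (fun a b => U a b - W a b) y
      else normL1 (fun a b => U a b - W a b) := by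
  obtain ⟨i, j⟩ := p
  simp only [SimpleGraph.sortedEdges, mem_filter, mem_univ, true_and] at hp
  have hj1 : j ≠ 1 := by
    rintro rfl
    exact hnadj ((Fin.lt_one_iff _).1 hp.1 ▸ hp.2)
  refine integral_pi_update_update_pair (D := fun a b => |U a b - W a b|) (hUmeas.sub hWmeas).abs
    (.of_bound (hUmeas.sub hWmeas).abs.aestronglyMeasurable 1 <| .of_forall fun q => ?_)
    x y hp.1 hj1
  show ‖|U q.1 q.2 - W q.1 q.2|‖ ≤ 1
  rw [Real.norm_eq_abs, abs_abs, ← Real.dist_eq]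
  exact Real.dist_le_of_mem_Icc_01 (hUrange q.1 q.2) (hWrange q.1 q.2)

end PartialDensity

theorem partialDensity_diff_bound_general {n : ℕ} (G : SimpleGraph (Fin (n + 2))) [DecidableRel G.Adj]
    (U W : ℝ → ℝ → ℝ)
    (hUmeas : Measurable fun p : ℝ × ℝ => U p.1 p.2)
    (hWmeas : Measurable fun p : ℝ × ℝ => W p.1 p.2)
    (hUrange : ∀ x y, U x y ∈ Set.Icc (0 : ℝ) 1)
    (hWrange : ∀ x y, W x y ∈ Set.Icc (0 : ℝ) 1)
    (hnadj : ¬ G.Adj 0 1)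
    (x y : ℝ) :
    |partialDensity G U x y - partialDensity G W x y| ≤
      (G.degree 0 : ℝ) * normAt (fun a b => U a b - W a b) x
      + (G.degree 1 : ℝ) * normAt (fun a b => U a b - W a b) y
      + ((G.edgeFinset.card : ℝ) - G.degree 0 - G.degree 1)
          * normL1 (fun a b => U a b - W a b) := by
  have hpin : ∀ i, Measurable fun v : Fin (n + 2) → ℝ =>
      Function.update (Function.update v 0 x) 1 y i := fun i =>
    (measurable_pi_apply i).comp (measurable_update_left.comp measurable_update_left)
  have hfactor : ∀ V : ℝ → ℝ → ℝ, Measurable (Function.uncurry V) → ∀ p : Fin (n + 2) × Fin (n + 2),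
      Measurable fun v : Fin (n + 2) → ℝ => V (Function.update (Function.update v 0 x) 1 y p.1)
        (Function.update (Function.update v 0 x) 1 y p.2) :=
    fun V hV p => hV.comp ((hpin p.1).prodMk (hpin p.2))
  have hbound : ∀ V : ℝ → ℝ → ℝ, (∀ a b, V a b ∈ Set.Icc (0 : ℝ) 1) → ∀ a b, |V a b| ≤ 1 :=
    fun V hV a b => (abs_of_nonneg (hV a b).1).trans_le (hV a b).2
  have hdeg0 : ∀ w, G.Adj 0 w → 0 < w := fun w h => Fin.pos_of_ne_zero h.ne.symm
  have hdeg1 : ∀ w, G.Adj 1 w → 1 < w := fun w h =>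
    Fin.one_lt_of_ne_zero_of_ne_one (fun h0 => hnadj (h0 ▸ h).symm) h.ne.symm
  rw [partialDensity_eq_integral_pi, partialDensity_eq_integral_pi]
  refine (abs_integral_prod_sub_integral_prod_le _
    (fun p _ => (hfactor U hUmeas p).aestronglyMeasurable)
    (fun p _ => (hfactor W hWmeas p).aestronglyMeasurable)
    (fun _ _ _ => hbound U hUrange _ _) (fun _ _ _ => hbound W hWrange _ _)).trans_eq ?_
  rw [sum_congr rfl fun p hp =>
      integral_abs_sub_of_mem_sortedEdges G hUmeas hWmeas hUrange hWrange hnadj x y hp,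
    sum_ite_ite_const _ _ _ (fun _ _ h0 h1 => zero_ne_one (h0.symm.trans h1)),
    G.card_sortedEdges, G.card_filter_fst_sortedEdges hdeg0, G.card_filter_fst_sortedEdges hdeg1]

/-- if `U, W : [0,1]² → [0,1]` are symmetric measurable and `F` is a simple graph
with `m` edges in which the labeled vertices `0` and `1` are nonadjacent and have degrees
`d₁, d₂`, then `|t_{xy}(F,U) - t_{xy}(F,W)| ≤ d₁‖U-W‖_x + d₂‖U-W‖_y + (m-d₁-d₂)‖U-W‖₁`. -/
theorem partialDensity_diff_bound {n : ℕ} (G : SimpleGraph (Fin (n + 2))) [DecidableRel G.Adj]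
    (U W : ℝ → ℝ → ℝ)
    (hUmeas : Measurable fun p : ℝ × ℝ => U p.1 p.2)
    (hWmeas : Measurable fun p : ℝ × ℝ => W p.1 p.2)
    (hUsymm : ∀ x y, U x y = U y x) (hWsymm : ∀ x y, W x y = W y x)
    (hUrange : ∀ x y, U x y ∈ Set.Icc (0 : ℝ) 1)
    (hWrange : ∀ x y, W x y ∈ Set.Icc (0 : ℝ) 1)
    (hnadj : ¬ G.Adj 0 1)
    (x y : ℝ) (hx : x ∈ Set.Icc (0 : ℝ) 1) (hy : y ∈ Set.Icc (0 : ℝ) 1) :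
    |partialDensity G U x y - partialDensity G W x y| ≤
      (G.degree 0 : ℝ) * normAt (fun a b => U a b - W a b) x
      + (G.degree 1 : ℝ) * normAt (fun a b => U a b - W a b) y
      + ((G.edgeFinset.card : ℝ) - G.degree 0 - G.degree 1)
          * normL1 (fun a b => U a b - W a b) :=
  partialDensity_diff_bound_general G U W hUmeas hWmeas hUrange hWrange hnadj x y
end

section
/- Let V be a finite-dimensional commutative real algebra equipped with a bilinear form ⟨x,y⟩ = f(xy) (f linear) that is positive semidefinite and nondegenerate on V, satisfying ⟨xy,z⟩ = ⟨x,yz⟩. Then V has a basis p₁,…,p_N of idempotents with pᵢ² = pᵢ and pᵢpⱼ = 0 for i ≠ j. -/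
/-!
Positivity and nondegeneracy make `⟨x, y⟩ = f (x * y)` an inner product, for which every
multiplication operator `y ↦ x * y` is symmetric. These operators commute, so `V` is the sum
of their joint eigenspaces. A nonzero joint eigenvector `v` satisfies `v * v = χ v • v` with
`χ v ≠ 0` (as `v * v ≠ 0`), so `(χ v)⁻¹ • v` is an idempotent `e` with `V e = ℝ e`; distinct
such idempotents are orthogonal, hence linearly independent, and they span `V`.
-/

theorem OrthogonalIdempotents.linearIndependent {K A ι : Type*} [Field K] [Ring A] [Algebra K A]
    {e : ι → A} (he : OrthogonalIdempotents e) (hne : ∀ i, e i ≠ 0) :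
    LinearIndependent K e := by
  classical
  rw [linearIndependent_iff']
  intro s g hg i hi
  have : e i * ∑ j ∈ s, g j • e j = g i • e i := by
    simp [Finset.mul_sum, he.mul_eq, hi]
  rw [hg, mul_zero] at this
  exact (smul_eq_zero.1 this.symm).resolve_right (hne i)

section Idempotents

variable (K : Type*) {A : Type*} [Field K] [CommRing A] [Algebra K A]

/-- Primitive in the strongest sense: the ideal `A e` is the line `K e`. -/
structure IsPrimitiveIdempotent (e : A) : Prop where
  isIdempotentElem : IsIdempotentElem e
  ne_zero : e ≠ 0
  exists_mul_eq_smul : ∀ x : A, ∃ c : K, x * e = c • e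

variable {K}

theorem IsPrimitiveIdempotent.mul_eq_zero_or_eq {e q : A} (he : IsPrimitiveIdempotent K e)
    (hq : IsIdempotentElem q) : q * e = 0 ∨ q * e = e := by
  obtain ⟨c, hc⟩ := he.exists_mul_eq_smul q
  have hcc : (c * c) • e = c • e := by
    have := (hq.mul he.isIdempotentElem).eq
    rwa [hc, smul_mul_smul_comm, he.isIdempotentElem.eq] at this
  rcases IsIdempotentElem.iff_eq_zero_or_one.1 (smul_left_injective K he.ne_zero hcc)
    with rfl | rfl <;> simp [hc]

theorem IsPrimitiveIdempotent.mul_eq_zero {e e' : A} (he : IsPrimitiveIdempotent K e)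
    (he' : IsPrimitiveIdempotent K e') (hne : e ≠ e') : e * e' = 0 := by
  rcases he'.mul_eq_zero_or_eq he.isIdempotentElem with h | h
  · exact h
  rcases he.mul_eq_zero_or_eq he'.isIdempotentElem with h' | h'
  · rwa [mul_comm]
  exact absurd (h'.symm.trans ((mul_comm _ _).trans h)) hne

theorem mem_span_isPrimitiveIdempotent_of_mul_eq_smul (hred : ∀ w : A, w * w = 0 → w = 0)
    {χ : A → K} {v : A} (hv : ∀ x, x * v = χ x • v) :
    v ∈ Submodule.span K {e : A | IsPrimitiveIdempotent K e} := by
  rcases eq_or_ne v 0 with rfl | hv0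
  · exact Submodule.zero_mem _
  have hχ : χ v ≠ 0 := fun h => hv0 (hred v (by rw [hv, h, zero_smul]))
  have he : IsPrimitiveIdempotent K ((χ v)⁻¹ • v) := by
    refine ⟨?_, smul_ne_zero (inv_ne_zero hχ) hv0,
      fun x => ⟨χ x, by rw [mul_smul_comm, hv, smul_comm]⟩⟩
    rw [IsIdempotentElem, smul_mul_smul_comm, hv, smul_smul, mul_assoc, inv_mul_cancel₀ hχ,
      mul_one]
  have : v = χ v • (χ v)⁻¹ • v := by rw [smul_smul, mul_inv_cancel₀ hχ, one_smul]
  rw [this]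
  exact Submodule.smul_mem _ _ (Submodule.subset_span he)

theorem exists_basis_orthogonalIdempotents_of_span_eq_top [Module.Finite K A]
    (hspan : Submodule.span K {e : A | IsPrimitiveIdempotent K e} = ⊤) :
    ∃ (N : ℕ) (b : Module.Basis (Fin N) K A), OrthogonalIdempotents b := by
  set s := {e : A | IsPrimitiveIdempotent K e}
  have hortho : OrthogonalIdempotents ((↑) : s → A) :=
    ⟨fun e => e.2.isIdempotentElem,
      fun e e' hne => e.2.mul_eq_zero e'.2 (Subtype.coe_injective.ne hne)⟩
  let b : Module.Basis s K A := .mk (hortho.linearIndependent fun e => e.2.ne_zero)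
    (by rw [Subtype.range_coe, hspan])
  have : Finite s := Module.Finite.finite_basis b
  refine ⟨Nat.card s, b.reindex (Finite.equivFin s), ?_⟩
  convert hortho.embedding (Finite.equivFin s).symm.toEmbedding
  ext i
  simp only [b, Module.Basis.reindex_apply, Module.Basis.mk_apply, Function.comp_apply,
    Equiv.coe_toEmbedding]

end Idempotents

section TraceForm

variable {V : Type*} [CommRing V] [Algebra ℝ V] {f : V →ₗ[ℝ] ℝ}

theorem eq_zero_of_map_mul_self_eq_zero (hpsd : ∀ x : V, 0 ≤ f (x * x))
    (hnd : ∀ x : V, (∀ y : V, f (x * y) = 0) → x = 0) {x : V} (hx : f (x * x) = 0) :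
    x = 0 := by
  refine hnd x fun y => ?_
  have hquad : ∀ t : ℝ, 0 ≤ f (y * y) * (t * t) + 2 * f (x * y) * t + f (x * x) := fun t => by
    convert hpsd (t • y + x) using 1
    simp only [add_mul, mul_add, smul_mul_assoc, mul_smul_comm, map_add, map_smul, smul_eq_mul,
      mul_comm y x]
    ring
  have := discrim_le_zero hquad
  rw [discrim, hx] at this
  nlinarith [sq_nonneg (f (x * y))]

theorem span_isPrimitiveIdempotent_eq_top [Module.Finite ℝ V] (hpsd : ∀ x : V, 0 ≤ f (x * x))
    (hdef : ∀ x : V, f (x * x) = 0 → x = 0) :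
    Submodule.span ℝ {e : V | IsPrimitiveIdempotent ℝ e} = ⊤ := by
  let core : InnerProductSpace.Core ℝ V :=
    { inner := fun x y => f (x * y)
      conj_inner_symm := fun x y => by simp [mul_comm]
      re_inner_nonneg := hpsd
      add_left := fun x y z => by simp [add_mul]
      smul_left := fun x y r => by simp
      definite := hdef }
  let _ : NormedAddCommGroup V := core.toNormedAddCommGroup
  let _ : InnerProductSpace ℝ V := .ofCore core.toCore
  have hsym (x : V) : (LinearMap.mulLeft ℝ x).IsSymmetric := fun v w =>
    show f (x * v * w) = f (v * (x * w)) by ring_nf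
  have hcomm :
      Pairwise fun x y : V => Commute (LinearMap.mulLeft ℝ x) (LinearMap.mulLeft ℝ y) :=
    fun x y _ => (Commute.all x y).map (Algebra.lmul ℝ V)
  rw [eq_top_iff, ← LinearMap.IsSymmetric.iSup_iInf_eq_top_of_commute hsym hcomm, iSup_le_iff]
  intro χ v hv
  have hχ (x : V) : x * v = χ x • v := by
    simpa using Module.End.mem_eigenspace_iff.1 ((Submodule.mem_iInf _).1 hv x)
  exact mem_span_isPrimitiveIdempotent_of_mul_eq_smul
    (fun w hw => hdef w (by rw [hw, map_zero])) hχ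

end TraceForm

theorem exists_idempotent_basis_general (V : Type*) [CommRing V] [Algebra ℝ V] [Module.Finite ℝ V]
    (f : V →ₗ[ℝ] ℝ)
    (hpsd : ∀ x : V, 0 ≤ f (x * x))
    (hnd : ∀ x : V, (∀ y : V, f (x * y) = 0) → x = 0) :
    ∃ (N : ℕ) (b : Module.Basis (Fin N) ℝ V),
      (∀ i, b i * b i = b i) ∧ ∀ i j, i ≠ j → b i * b j = 0 := by
  obtain ⟨N, b, hb⟩ := exists_basis_orthogonalIdempotents_of_span_eq_top <|
    span_isPrimitiveIdempotent_eq_top hpsd fun _ => eq_zero_of_map_mul_self_eq_zero hpsd hnd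
  exact ⟨N, b, fun i => (hb.idem i).eq, fun _ _ hij => hb.ortho hij⟩

/-- a finite-dimensional commutative real algebra with a linear functional `f`
whose associated bilinear form `⟨x,y⟩ = f(xy)` is positive semidefinite, nondegenerate and
associative has a basis of pairwise-orthogonal idempotents. -/
theorem exists_idempotent_basis (V : Type*) [CommRing V] [Algebra ℝ V] [Module.Finite ℝ V]
    (f : V →ₗ[ℝ] ℝ)
    (hpsd : ∀ x : V, 0 ≤ f (x * x))
    (hnd : ∀ x : V, (∀ y : V, f (x * y) = 0) → x = 0)
    (hassoc : ∀ x y z : V, f ((x * y) * z) = f (x * (y * z))) :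
    ∃ (N : ℕ) (b : Module.Basis (Fin N) ℝ V),
      (∀ i, b i * b i = b i) ∧ ∀ i j, i ≠ j → b i * b j = 0 :=
  exists_idempotent_basis_general V f hpsd hnd
end
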